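/- Assume l = 2 and k ≥ 1. The lantern configuration F_lan satisfies the Hopf multiplicity data, it is different as a multiset from the standard configuration F_std, and it has exactly k + 4 members, i.e. one member fewer than F_std. -/
import Mathlib


/-- The set of holes: the distinguished hole `s` is `none`, the positive holes are
`some (Sum.inl i)` for `i : Fin k`, the negative holes are `some (Sum.inr j)` for `j : Fin l`. -/
abbrev Hole (k l : ℕ) := Option (Fin k ⊕ Fin l)

/-- The distinguished hole `s`. -/
def sHole (k l : ℕ) : Hole k l := none

/-- The `i`-th positive hole. -/
def posHole (k l : ℕ) (i : Fin k) : Hole k l := some (Sum.inl i)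

/-- The `j`-th negative hole. -/
def negHole (k l : ℕ) (j : Fin l) : Hole k l := some (Sum.inr j)

/-- The set `P` of positive holes. -/
def Pset (k l : ℕ) : Finset (Hole k l) := Finset.univ.image (posHole k l)

/-- The set `N` of negative holes. -/
def Nset (k l : ℕ) : Finset (Hole k l) := Finset.univ.image (negHole k l)

/-- The multiplicity `m(x)`: the number of members of `F`, counted with multiplicity,
containing the hole `x`. -/
def mult {k l : ℕ} (F : Multiset (Finset (Hole k l))) (x : Hole k l) : ℕ :=
  (F.filter (fun A => x ∈ A)).card

/-- The joint multiplicity `m(x,y)`: the number of members of `F`, counted with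
multiplicity, containing both holes `x` and `y`. -/
def jmult {k l : ℕ} (F : Multiset (Finset (Hole k l))) (x y : Hole k l) : ℕ :=
  (F.filter (fun A => x ∈ A ∧ y ∈ A)).card

/-- `F` satisfies the Hopf multiplicity data: `m(x) = 3` for all `x`; `m(x,y) = 2`
whenever `x ≠ y` both lie in `P ∪ {s}` or both lie in `N ∪ {s}`; `m(x,y) = 1`
whenever `x ∈ P` and `y ∈ N`. -/
def HopfData {k l : ℕ} (F : Multiset (Finset (Hole k l))) : Prop :=
  (∀ x : Hole k l, mult F x = 3) ∧
  (∀ x y : Hole k l, x ≠ y → x ∈ insert (sHole k l) (Pset k l) →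
      y ∈ insert (sHole k l) (Pset k l) → jmult F x y = 2) ∧
  (∀ x y : Hole k l, x ≠ y → x ∈ insert (sHole k l) (Nset k l) →
      y ∈ insert (sHole k l) (Nset k l) → jmult F x y = 2) ∧
  (∀ x y : Hole k l, x ∈ Pset k l → y ∈ Nset k l → jmult F x y = 1)

/-- The standard configuration `F_std`: the full set `H`, the set `{s} ∪ P`,
the set `{s} ∪ N`, and a singleton `{x}` for each `x ∈ P ∪ N`. -/
def Fstd (k l : ℕ) : Multiset (Finset (Hole k l)) :=
  (Finset.univ : Finset (Hole k l)) ::ₘ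
  insert (sHole k l) (Pset k l) ::ₘ
  insert (sHole k l) (Nset k l) ::ₘ
  ((Pset k l ∪ Nset k l).val.map (fun x => {x}))

/-- The lantern configuration `F_lan` (for `l = 2`): the sets `{s} ∪ P ∪ {n₁}`,
`{s} ∪ P ∪ {n₂}`, `{n₁, n₂}`, `{s, n₁, n₂}`, and a singleton `{p}` for each `p ∈ P`. -/
def Flan (k : ℕ) : Multiset (Finset (Hole k 2)) :=
  insert (sHole k 2) (Pset k 2 ∪ {negHole k 2 0}) ::ₘ
  insert (sHole k 2) (Pset k 2 ∪ {negHole k 2 1}) ::ₘ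
  ({negHole k 2 0, negHole k 2 1} : Finset (Hole k 2)) ::ₘ
  ({sHole k 2, negHole k 2 0, negHole k 2 1} : Finset (Hole k 2)) ::ₘ
  ((Pset k 2).val.map (fun x => {x}))

lemma card_Pset (k l : ℕ) : (Pset k l).card = k := by
  rw [Pset, Finset.card_image_of_injective]
  · simp
  · intro a b h
    simpa [posHole] using h

lemma card_Nset (k l : ℕ) : (Nset k l).card = l := by
  rw [Nset, Finset.card_image_of_injective]
  · simp
  · intro a b h
    simpa [negHole] using h

lemma disj_PN (k l : ℕ) : Disjoint (Pset k l) (Nset k l) := by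
  rw [Finset.disjoint_left]
  rintro a ha hb
  simp only [Pset, Nset, Finset.mem_image, posHole, negHole] at ha hb
  obtain ⟨i, _, hi⟩ := ha
  obtain ⟨j, _, hj⟩ := hb
  rw [← hi] at hj
  simp at hj

lemma mult_cons {k l : ℕ} (a : Finset (Hole k l)) (F : Multiset (Finset (Hole k l)))
    (x : Hole k l) :
    mult (a ::ₘ F) x = (if x ∈ a then 1 else 0) + mult F x := by
  simp [mult, Multiset.filter_cons, Multiset.card_add, apply_ite Multiset.card, add_comm]

lemma jmult_cons {k l : ℕ} (a : Finset (Hole k l)) (F : Multiset (Finset (Hole k l)))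
    (x y : Hole k l) :
    jmult (a ::ₘ F) x y = (if x ∈ a ∧ y ∈ a then 1 else 0) + jmult F x y := by
  simp [jmult, Multiset.filter_cons, Multiset.card_add, apply_ite Multiset.card, add_comm]

lemma mult_singletons {k l : ℕ} (s : Finset (Hole k l)) (x : Hole k l) :
    mult (s.val.map (fun p => ({p} : Finset (Hole k l)))) x = if x ∈ s then 1 else 0 := by
  rw [mult, ← Multiset.countP_eq_card_filter, Multiset.countP_map]
  simp only [Finset.mem_singleton]
  have : (Multiset.filter (fun a => x = a) s.val) = (s.filter (fun a => x = a)).val := rfl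
  rw [this, ← Finset.card_def, Finset.filter_eq]
  split <;> simp

lemma jmult_singletons {k l : ℕ} (s : Finset (Hole k l)) (x y : Hole k l) (h : x ≠ y) :
    jmult (s.val.map (fun p => ({p} : Finset (Hole k l)))) x y = 0 := by
  rw [jmult, ← Multiset.countP_eq_card_filter, Multiset.countP_map]
  convert Multiset.card_zero
  rw [Multiset.filter_eq_nil]
  rintro a _ ⟨h1, h2⟩
  simp only [Finset.mem_singleton] at h1 h2
  exact h (h1.trans h2.symm)

lemma mult_Flan (k : ℕ) (x : Hole k 2) : mult (Flan k) x = 3 := by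
  rw [Flan, mult_cons, mult_cons, mult_cons, mult_cons, mult_singletons]
  match x with
  | none => simp [sHole, posHole, negHole, Pset, Nset]
  | some (Sum.inl i) => simp [sHole, posHole, negHole, Pset, Nset]
  | some (Sum.inr j) =>
      fin_cases j <;> simp [sHole, posHole, negHole, Pset, Nset]


lemma jmult_Flan_P (k : ℕ) (x y : Hole k 2) (hne : x ≠ y)
    (hx : x ∈ insert (sHole k 2) (Pset k 2)) (hy : y ∈ insert (sHole k 2) (Pset k 2)) :
    jmult (Flan k) x y = 2 := by
  rw [Flan, jmult_cons, jmult_cons, jmult_cons, jmult_cons, jmult_singletons _ _ _ hne]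
  simp only [Finset.mem_insert, Pset, Finset.mem_image, Finset.mem_univ, true_and] at hx hy
  rcases hx with rfl | ⟨i, rfl⟩ <;> rcases hy with rfl | ⟨i', rfl⟩ <;>
    simp_all [sHole, posHole, negHole, Pset, Nset]

lemma jmult_Flan_N (k : ℕ) (x y : Hole k 2) (hne : x ≠ y)
    (hx : x ∈ insert (sHole k 2) (Nset k 2)) (hy : y ∈ insert (sHole k 2) (Nset k 2)) :
    jmult (Flan k) x y = 2 := by
  rw [Flan, jmult_cons, jmult_cons, jmult_cons, jmult_cons, jmult_singletons _ _ _ hne]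
  simp only [Finset.mem_insert, Nset, Finset.mem_image, Finset.mem_univ, true_and] at hx hy
  rcases hx with rfl | ⟨j, rfl⟩ <;> rcases hy with rfl | ⟨j', rfl⟩
  · exact absurd rfl hne
  · fin_cases j' <;> simp [sHole, posHole, negHole, Pset, Nset]
  · fin_cases j <;> simp [sHole, posHole, negHole, Pset, Nset]
  · fin_cases j <;> fin_cases j' <;> simp_all [sHole, posHole, negHole, Pset, Nset]

lemma jmult_Flan_PN (k : ℕ) (x y : Hole k 2)
    (hx : x ∈ Pset k 2) (hy : y ∈ Nset k 2) :
    jmult (Flan k) x y = 1 := by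
  have hne : x ≠ y := by
    intro h; exact (Finset.disjoint_left.mp (disj_PN k 2)) hx (h ▸ hy)
  rw [Flan, jmult_cons, jmult_cons, jmult_cons, jmult_cons, jmult_singletons _ _ _ hne]
  simp only [Pset, Nset, Finset.mem_image, Finset.mem_univ, true_and] at hx hy
  obtain ⟨i, rfl⟩ := hx
  obtain ⟨j, rfl⟩ := hy
  fin_cases j <;> simp [sHole, posHole, negHole, Pset, Nset]

lemma card_Flan (k : ℕ) : Multiset.card (Flan k) = k + 4 := by
  have : (Pset k 2).val.card = k := card_Pset k 2
  simp [Flan, this]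

lemma card_Fstd (k l : ℕ) : Multiset.card (Fstd k l) = k + l + 3 := by
  have h : (Pset k l ∪ Nset k l).card = k + l := by
    rw [Finset.card_union_of_disjoint (disj_PN k l), card_Pset, card_Nset]
  simp only [Fstd, Multiset.card_cons, Multiset.card_map]
  rw [show Multiset.card (Pset k l ∪ Nset k l).val = (Pset k l ∪ Nset k l).card from rfl, h]

/-- For `l = 2` and `k ≥ 1`, the lantern configuration `F_lan` is a multiset
of nonempty subsets of `H` satisfying the Hopf multiplicity data, it differs from `F_std` as a
multiset, and it has exactly `k + 4` members, one fewer than `F_std`. -/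
theorem Flan_hopfData (k : ℕ) (hk : 1 ≤ k) :
    (∀ A ∈ Flan k, A.Nonempty) ∧ HopfData (Flan k) ∧ Flan k ≠ Fstd k 2 ∧
    Multiset.card (Flan k) = k + 4 ∧
    Multiset.card (Flan k) + 1 = Multiset.card (Fstd k 2) := by
  refine ⟨?_, ⟨mult_Flan k, jmult_Flan_P k, jmult_Flan_N k, jmult_Flan_PN k⟩, ?_, card_Flan k, ?_⟩
  · intro A hA
    rw [Flan] at hA
    simp only [Multiset.mem_cons, Multiset.mem_map] at hA
    rcases hA with rfl | rfl | rfl | rfl | ⟨p, _, rfl⟩ <;>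
      first
        | exact Finset.insert_nonempty _ _
        | exact Finset.singleton_nonempty _
  · intro h
    have := congrArg Multiset.card h
    rw [card_Flan, card_Fstd] at this
    omega
  · rw [card_Flan, card_Fstd]
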